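/- There exists ω_∞ > 0 such that for all ω > ω_∞, the partition induced on any layer s by any globally optimal multilayer partition C_max^ω is a maximizer of the single-layer modularity problem defined on the summed modularity matrix Σ_{s=1}^{|T|} B_s; that is, C_max^ω|_s solves max_C Σ_{i,j=1}^N (Σ_{s=1}^{|T|} B_{ijs}) δ(c_i, c_j). -/

import Mathlib

open Finset

/-- Kronecker delta on community labels, as a real number. -/
noncomputable def kdelta (a b : ℕ) : ℝ := if a = b then 1 else 0

/-- Persistence between layers `s` and `s+1`: the number of nodes whose community
assignment is unchanged from layer `s` to layer `s+1`. -/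
def persAt (N : ℕ) (c : ℕ → Fin N → ℕ) (s : ℕ) : ℕ :=
  (Finset.univ.filter fun i : Fin N => c s i = c (s + 1) i).card

/-- Total persistence of a multilayer partition: `Pers(C) = Σ_{s=1}^{|T|-1} Σ_i δ(c_{i_s}, c_{i_{s+1}})`. -/
def pers (N T : ℕ) (c : ℕ → Fin N → ℕ) : ℕ :=
  ∑ s ∈ Finset.range (T - 1), persAt N c s

/-- Multilayer modularity quality function
`Q(C) = Σ_s Σ_{i,j} B_{ijs} δ(c_{i_s}, c_{j_s}) + 2 ω Pers(C)`. -/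
noncomputable def Q (N T : ℕ) (B : ℕ → Fin N → Fin N → ℝ) (ω : ℝ) (c : ℕ → Fin N → ℕ) : ℝ :=
  (∑ s ∈ Finset.range T, ∑ i : Fin N, ∑ j : Fin N, B s i j * kdelta (c s i) (c s j))
    + 2 * ω * (pers N T c : ℝ)

/-- A multilayer partition (given by its community-assignment function) is globally
optimal for inter-layer coupling `ω` if it maximizes the multilayer quality function. -/
def IsOptimal (N T : ℕ) (B : ℕ → Fin N → Fin N → ℝ) (ω : ℝ) (c : ℕ → Fin N → ℕ) : Prop :=
  ∀ c' : ℕ → Fin N → ℕ, Q N T B ω c' ≤ Q N T B ω c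

/-- Adjacency (nonzero weight) in the multilayer modularity matrix: intra-layer entries
`B_{ijs}` and ordinal diagonal uniform inter-layer coupling `ω` between consecutive layers. -/
def Adj (N T : ℕ) (B : ℕ → Fin N → Fin N → ℝ) (ω : ℝ) (p q : ℕ × Fin N) : Prop :=
  (p.1 = q.1 ∧ p.1 < T ∧ B p.1 p.2 q.2 ≠ 0) ∨
  (p.2 = q.2 ∧ ω ≠ 0 ∧ ((p.1 + 1 = q.1 ∧ q.1 < T) ∨ (q.1 + 1 = p.1 ∧ p.1 < T)))

/-- No community of the multilayer partition contains a component that is disconnected in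
the weighted graph whose adjacency matrix is the multilayer modularity matrix: any two
node-layer pairs in the same community are joined by a path staying inside that community. -/
def NoDisconnectedCommunities (N T : ℕ) (B : ℕ → Fin N → Fin N → ℝ) (ω : ℝ)
    (c : ℕ → Fin N → ℕ) : Prop :=
  ∀ p q : ℕ × Fin N, p.1 < T → q.1 < T → c p.1 p.2 = c q.1 q.2 →
    Relation.ReflTransGen
      (fun a b => Adj N T B ω a b ∧ c a.1 a.2 = c p.1 p.2 ∧ c b.1 b.2 = c p.1 p.2) p q

/-- Single-layer modularity quality for a matrix `M` and assignment `a`. -/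
noncomputable def Qsingle (N : ℕ) (M : Fin N → Fin N → ℝ) (a : Fin N → ℕ) : ℝ :=
  ∑ i : Fin N, ∑ j : Fin N, M i j * kdelta (a i) (a j)

/-! Let `K = Σ_s Σ_{i,j} |B_{ijs}|`. The intra-layer part of `Q` always lies in `[-K, K]`,
while each unit of persistence is worth `2ω`; so for `ω > K` an optimal partition has full
persistence, i.e. is the same partition `c` on every layer. On such layer-constant partitions
`Q` equals the single-layer quality of `c` for the summed matrix `Σ_s B_s` plus the constant
`2ωN(|T|-1)`, so optimality of the multilayer partition is optimality of `c` for `Σ_s B_s`. -/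

noncomputable def intraLayerQ (N T : ℕ) (B : ℕ → Fin N → Fin N → ℝ) (c : ℕ → Fin N → ℕ) : ℝ :=
  ∑ s ∈ range T, ∑ i : Fin N, ∑ j : Fin N, B s i j * kdelta (c s i) (c s j)

lemma Q_eq_intraLayerQ_add (N T : ℕ) (B : ℕ → Fin N → Fin N → ℝ) (ω : ℝ) (c : ℕ → Fin N → ℕ) :
    Q N T B ω c = intraLayerQ N T B c + 2 * ω * pers N T c := rfl

lemma abs_mul_kdelta_le (x : ℝ) (a b : ℕ) : |x * kdelta a b| ≤ |x| := by
  unfold kdelta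
  split_ifs <;> simp

lemma abs_intraLayerQ_le (N T : ℕ) (B : ℕ → Fin N → Fin N → ℝ) (c : ℕ → Fin N → ℕ) :
    |intraLayerQ N T B c| ≤ ∑ s ∈ range T, ∑ i : Fin N, ∑ j : Fin N, |B s i j| := by
  refine (abs_sum_le_sum_abs _ _).trans (sum_le_sum fun s _ => ?_)
  refine (abs_sum_le_sum_abs _ _).trans (sum_le_sum fun i _ => ?_)
  exact (abs_sum_le_sum_abs _ _).trans (sum_le_sum fun j _ => abs_mul_kdelta_le _ _ _)

lemma intraLayerQ_const (N T : ℕ) (B : ℕ → Fin N → Fin N → ℝ) (a : Fin N → ℕ) :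
    intraLayerQ N T B (fun _ => a) = Qsingle N (fun i j => ∑ r ∈ range T, B r i j) a := by
  simp only [intraLayerQ, Qsingle, sum_mul]
  rw [sum_comm]
  exact sum_congr rfl fun i _ => sum_comm

lemma persAt_le (N : ℕ) (c : ℕ → Fin N → ℕ) (s : ℕ) : persAt N c s ≤ N :=
  (card_filter_le _ _).trans_eq (card_fin N)

lemma persAt_eq_iff (N : ℕ) (c : ℕ → Fin N → ℕ) (s : ℕ) :
    persAt N c s = N ↔ c s = c (s + 1) := by
  have hcard := card_eq_iff_eq_univ (univ.filter fun i : Fin N => c s i = c (s + 1) i)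
  rw [Fintype.card_fin] at hcard
  rw [persAt, hcard, funext_iff]
  simp

lemma pers_le (N T : ℕ) (c : ℕ → Fin N → ℕ) : pers N T c ≤ N * (T - 1) := by
  simpa [pers, mul_comm] using sum_le_sum fun s (_ : s ∈ range (T - 1)) => persAt_le N c s

lemma pers_const (N T : ℕ) (a : Fin N → ℕ) : pers N T (fun _ => a) = N * (T - 1) := by
  simp [pers, persAt, mul_comm]

lemma Q_const (N T : ℕ) (B : ℕ → Fin N → Fin N → ℝ) (ω : ℝ) (a : Fin N → ℕ) :
    Q N T B ω (fun _ => a) =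
      Qsingle N (fun i j => ∑ r ∈ range T, B r i j) a + 2 * ω * (N * (T - 1) : ℕ) := by
  rw [Q_eq_intraLayerQ_add, intraLayerQ_const, pers_const]

lemma Q_congr (N T : ℕ) (B : ℕ → Fin N → Fin N → ℝ) (ω : ℝ) {c c' : ℕ → Fin N → ℕ}
    (h : ∀ s < T, c s = c' s) : Q N T B ω c = Q N T B ω c' := by
  have hpers : pers N T c = pers N T c' := sum_congr rfl fun s hs => by
    rw [mem_range] at hs
    simp only [persAt, h s (by omega), h (s + 1) (by omega)]
  simp only [Q_eq_intraLayerQ_add, intraLayerQ, hpers]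
  congr 1
  exact sum_congr rfl fun s hs => by rw [h s (mem_range.mp hs)]

lemma eq_layer_zero_of_pers_eq {N T : ℕ} {c : ℕ → Fin N → ℕ} (h : pers N T c = N * (T - 1)) :
    ∀ s < T, c s = c 0 := by
  have hstep : ∀ s < T - 1, c s = c (s + 1) := by
    have hall := (sum_eq_sum_iff_of_le fun s (_ : s ∈ range (T - 1)) => persAt_le N c s).mp
      (by simpa [pers, mul_comm] using h)
    exact fun s hs => (persAt_eq_iff N c s).mp (hall s (mem_range.mpr hs))
  intro s hs
  induction s with
  | zero => rfl
  | succ s ih => rw [← hstep s (by omega), ih (by omega)]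

lemma pers_eq_of_isOptimal {N T : ℕ} {B : ℕ → Fin N → Fin N → ℝ} {ω : ℝ} {c : ℕ → Fin N → ℕ}
    (hω : ∑ s ∈ range T, ∑ i : Fin N, ∑ j : Fin N, |B s i j| < ω)
    (hc : IsOptimal N T B ω c) : pers N T c = N * (T - 1) := by
  by_contra hne
  have hlt : (pers N T c : ℝ) + 1 ≤ (N * (T - 1) : ℕ) := by
    exact_mod_cast lt_of_le_of_ne (pers_le N T c) hne
  have hopt := hc fun _ => c 0
  rw [Q_eq_intraLayerQ_add, Q_eq_intraLayerQ_add, pers_const] at hopt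
  have hintra := abs_le.mp (abs_intraLayerQ_le N T B c)
  have hintra0 := abs_le.mp (abs_intraLayerQ_le N T B fun _ => c 0)
  nlinarith

/-- **Proposition 6.** There exists `ω_∞ > 0` such that for all `ω > ω_∞`, the partition
induced on any layer `s` by any globally optimal multilayer partition maximizes the
single-layer modularity problem defined on the summed modularity matrix `Σ_s B_s`. -/
theorem large_coupling_layers_solve_summed_matrix
    (N T : ℕ)
    (B : ℕ → Fin N → Fin N → ℝ) :
    ∃ ωinf : ℝ, 0 < ωinf ∧ ∀ ω : ℝ, ωinf < ω →
      ∀ c : ℕ → Fin N → ℕ, IsOptimal N T B ω c →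
        ∀ s : ℕ, s < T →
          ∀ a : Fin N → ℕ,
            Qsingle N (fun i j => ∑ r ∈ Finset.range T, B r i j) a ≤
            Qsingle N (fun i j => ∑ r ∈ Finset.range T, B r i j) (c s) := by
  set K := ∑ s ∈ range T, ∑ i : Fin N, ∑ j : Fin N, |B s i j|
  refine ⟨K + 1, by positivity, fun ω hω c hc s hs a => ?_⟩
  have hconst := eq_layer_zero_of_pers_eq (pers_eq_of_isOptimal (by linarith) hc)
  have hopt := hc fun _ => a
  rw [Q_congr N T B ω hconst, Q_const, Q_const] at hopt
  rw [hconst s hs]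
  linarith
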